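/- arXiv:1406.2740 — 2 statements merged into one kernel-verified Lean document; each statement's English description precedes it below -/
import Mathlib

section
/- For every s ∈ S, the following identities hold pointwise as ℤ-valued functions on ∂F_d, where (g·f)(x) := f(g^{-1}·x) for g ∈ F_d: (i) q[s^2] = s·q[s] + s^{-1}·q[s] + q[s] − 2, where 2 denotes the constant function with value 2; (ii) for every integer k > 2, q[s^k] = s·q[s^{k-1}] + s^{-1}·q[s^{k-1}] − q[s^{k-2}]. Here q[s^n] := p[s^n] + p[s^{-n}] for n ≥ 1. -/
/-- The alphabet of the free group on `d` generators: a generator together with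
a sign (`true` = the generator itself, `false` = its inverse). -/
abbrev Letter (d : ℕ) := Fin d × Bool

/-- The inverse of a letter. -/
def Letter.inv {d : ℕ} (a : Letter d) : Letter d := (a.1, !a.2)

/-- A sequence of letters is reduced if no letter is followed by its inverse. -/
def IsReducedSeq {d : ℕ} (x : ℕ → Letter d) : Prop :=
  ∀ n, x (n + 1) ≠ Letter.inv (x n)

/-- The boundary `∂F_d` of the free group on `d` generators: the space of
infinite reduced words, topologized as a subspace of the product space
`(Fin d × Bool)^ℕ` (each factor discrete). -/
abbrev Boundary (d : ℕ) := {x : ℕ → Letter d // IsReducedSeq x}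

/-- The number of letters cancelled at the junction when the (finite reduced)
word `u` is concatenated with the infinite reduced word `x`. -/
def cancelLen {d : ℕ} (u : List (Letter d)) (x : ℕ → Letter d) : ℕ :=
  Nat.findGreatest (fun k => ∀ i < k, u[u.length - 1 - i]? = some (Letter.inv (x i))) u.length

/-- The reduction of the concatenation of a finite reduced word `u` with an
infinite reduced word `x`. -/
def concatReduce {d : ℕ} (u : List (Letter d)) (x : ℕ → Letter d) : ℕ → Letter d :=
  fun n =>
    let k := cancelLen u x
    let m := u.length - k
    if h : n < m then u[n]'(by omega) else x (k + (n - m))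

open Classical in
/-- The boundary action of the free group on its boundary: left multiplication
followed by free reduction.  (The `if` always takes the `then` branch, since the
reduction of the concatenation of reduced words is again reduced; hence this is
exactly the usual boundary action `g · x`.) -/
noncomputable def boundaryAct {d : ℕ} (g : FreeGroup (Fin d)) (x : Boundary d) : Boundary d :=
  if h : IsReducedSeq (concatReduce (FreeGroup.toWord g) x.1) then
    ⟨concatReduce (FreeGroup.toWord g) x.1, h⟩
  else x

/-- `x` is the boundary point `w^{+∞}`, the limit of the sequence `(wⁿ)ₙ₌₁^∞`:
for every `k` there is `N` such that for all `n ≥ N` the reduced word of `wⁿ`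
has length at least `k` and its first `k` letters agree with those of `x`.
The point `w^{-∞}` is `(w⁻¹)^{+∞}`, i.e. `IsPlusLimit w⁻¹`. -/
def IsPlusLimit {d : ℕ} (w : FreeGroup (Fin d)) (x : Boundary d) : Prop :=
  ∀ k : ℕ, ∃ N : ℕ, ∀ n ≥ N,
    k ≤ (FreeGroup.toWord (w ^ n)).length ∧
    ∀ i < k, (FreeGroup.toWord (w ^ n))[i]? = some (x.1 i)

/-- The relation `R_W = Δ ∪ {(g·w^{+∞}, g·w^{-∞}) : g ∈ F_d, w ∈ W ∪ W⁻¹}`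
on the boundary `∂F_d`. -/
def RW {d : ℕ} (W : Set (FreeGroup (Fin d))) : Set (Boundary d × Boundary d) :=
  {p | p.1 = p.2} ∪
  {p | ∃ (g w : FreeGroup (Fin d)) (xp xm : Boundary d),
      (w ∈ W ∨ w⁻¹ ∈ W) ∧ IsPlusLimit w xp ∧ IsPlusLimit w⁻¹ xm ∧
      p.1 = boundaryAct g xp ∧ p.2 = boundaryAct g xm}

open Classical in
/-- `p[w]` : the (`ℤ`-valued) indicator function of the cylinder set of the
reduced word of `w` in the boundary. -/
noncomputable def pFun {d : ℕ} (w : FreeGroup (Fin d)) : Boundary d → ℤ :=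
  fun x =>
    if ∀ i < (FreeGroup.toWord w).length, (FreeGroup.toWord w)[i]? = some (x.1 i) then 1 else 0

/-- `q[s] = p[s] + p[s⁻¹]` for a generator `s`. -/
noncomputable def qFun {d : ℕ} (s : Fin d) : Boundary d → ℤ :=
  fun x => pFun (FreeGroup.of s) x + pFun (FreeGroup.of s)⁻¹ x

/-- `q[sⁿ] = p[sⁿ] + p[s⁻ⁿ]` for a generator `s`. -/
noncomputable def qPow {d : ℕ} (s : Fin d) (n : ℕ) : Boundary d → ℤ :=
  fun x => pFun (FreeGroup.of s ^ n) x + pFun ((FreeGroup.of s ^ n)⁻¹) x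

/-- The map `w ↦ ŵ` flipping the sign of the exponent of the last syllable of
the reduced word of `w`: if `w = s_{i(1)}^{n(1)} ⋯ s_{i(k)}^{n(k)}` then
`ŵ = s_{i(1)}^{n(1)} ⋯ s_{i(k-1)}^{n(k-1)} s_{i(k)}^{-n(k)}`.  (The final
syllable is the maximal terminal run of equal letters of the reduced word.) -/
def hatWord {d : ℕ} (w : FreeGroup (Fin d)) : FreeGroup (Fin d) :=
  match (FreeGroup.toWord w).reverse with
  | [] => w
  | a :: _ =>
    let k := ((FreeGroup.toWord w).reverse.takeWhile (fun b => b == a)).length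
    FreeGroup.mk ((FreeGroup.toWord w).take ((FreeGroup.toWord w).length - k) ++
      List.replicate k (Letter.inv a))

-- auxiliary development
namespace QP
open FreeGroup List
variable {d : ℕ}

lemma Letter.inv_inv (a : Letter d) : Letter.inv (Letter.inv a) = a := by
  simp [Letter.inv]

lemma Letter.inv_ne (a : Letter d) : Letter.inv a ≠ a := by
  simp [Letter.inv, Prod.ext_iff]

lemma mk_single_pow (a : Letter d) (n : ℕ) :
    (FreeGroup.mk [a]) ^ n = FreeGroup.mk (List.replicate n a) := by
  induction n with
  | zero => rfl
  | succ n ih => rw [pow_succ, ih, FreeGroup.mul_mk, ← List.replicate_succ']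

lemma of_pow (s : Fin d) (n : ℕ) :
    FreeGroup.of s ^ n = FreeGroup.mk (List.replicate n ((s, true) : Letter d)) :=
  mk_single_pow _ n

lemma of_pow_inv (s : Fin d) (n : ℕ) :
    (FreeGroup.of s ^ n)⁻¹ = FreeGroup.mk (List.replicate n ((s, false) : Letter d)) := by
  rw [of_pow, FreeGroup.inv_mk, FreeGroup.invRev]
  simp

lemma toWord_replicate (a : Letter d) (n : ℕ) :
    FreeGroup.toWord (FreeGroup.mk (List.replicate n a)) = List.replicate n a := by
  rw [FreeGroup.toWord_mk, FreeGroup.reduce_replicate]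

open Classical in
lemma pFun_replicate (a : Letter d) (n : ℕ) (x : Boundary d) :
    pFun (FreeGroup.mk (List.replicate n a)) x = if (∀ i < n, x.1 i = a) then 1 else 0 := by
  unfold pFun
  rw [toWord_replicate]
  congr 1
  simp only [List.length_replicate, List.getElem?_replicate, eq_iff_iff]
  constructor <;> intro h i hi <;> have := h i hi <;> simp [hi] at this ⊢ <;> simp [this]

lemma cancelLen_single (a : Letter d) (x : ℕ → Letter d) :
    cancelLen [a] x = if x 0 = Letter.inv a then 1 else 0 := by
  unfold cancelLen
  simp only [List.length_singleton]
  rw [Nat.findGreatest_succ]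
  by_cases h : x 0 = Letter.inv a
  · rw [if_pos, if_pos h]
    intro i hi
    interval_cases i
    simp [h, Letter.inv_inv]
  · rw [if_neg, if_neg h, Nat.findGreatest_zero]
    intro hP
    have h0 := hP 0 (by norm_num)
    simp at h0
    exact h (by rw [h0, Letter.inv_inv])

lemma concatReduce_single_cancel (a : Letter d) (x : ℕ → Letter d) (h : x 0 = Letter.inv a) :
    concatReduce [a] x = fun n => x (n + 1) := by
  have hk : cancelLen [a] x = 1 := by rw [cancelLen_single, if_pos h]
  funext n
  simp only [concatReduce, hk, List.length_singleton]
  norm_num [Nat.add_comm]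

lemma concatReduce_single_keep (a : Letter d) (x : ℕ → Letter d) (h : x 0 ≠ Letter.inv a) :
    concatReduce [a] x = fun n => if n = 0 then a else x (n - 1) := by
  have hk : cancelLen [a] x = 0 := by rw [cancelLen_single, if_neg h]
  funext n
  simp only [concatReduce, hk, List.length_singleton]
  rcases Nat.eq_zero_or_pos n with hn | hn
  · subst hn; simp
  · rw [dif_neg (by omega), if_neg (by omega)]
    simp

lemma boundaryAct_single (a : Letter d) (x : Boundary d) :
    (boundaryAct (FreeGroup.mk [a]) x).1 =
      if x.1 0 = Letter.inv a then (fun n => x.1 (n + 1))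
      else (fun n => if n = 0 then a else x.1 (n - 1)) := by
  have ht : FreeGroup.toWord (FreeGroup.mk [a]) = [a] := by
    simpa using toWord_replicate a 1
  by_cases h : x.1 0 = Letter.inv a
  · have hred : IsReducedSeq (concatReduce (FreeGroup.toWord (FreeGroup.mk [a])) x.1) := by
      rw [ht, concatReduce_single_cancel a x.1 h]
      intro n; exact x.2 (n + 1)
    rw [boundaryAct, dif_pos hred, if_pos h]
    show concatReduce (FreeGroup.toWord (FreeGroup.mk [a])) x.1 = _
    rw [ht]
    exact concatReduce_single_cancel a x.1 h
  · have hred : IsReducedSeq (concatReduce (FreeGroup.toWord (FreeGroup.mk [a])) x.1) := by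
      rw [ht, concatReduce_single_keep a x.1 h]
      intro n
      cases n with
      | zero => simpa using h
      | succ m => simpa using x.2 m
    rw [boundaryAct, dif_pos hred, if_neg h]
    show concatReduce (FreeGroup.toWord (FreeGroup.mk [a])) x.1 = _
    rw [ht]
    exact concatReduce_single_keep a x.1 h

open Classical in
lemma L1 (b : Letter d) (n : ℕ) (hn : 1 ≤ n) (x : Boundary d) :
    pFun (FreeGroup.mk (List.replicate n b)) (boundaryAct (FreeGroup.mk [Letter.inv b]) x) =
    pFun (FreeGroup.mk (List.replicate (n + 1) b)) x := by
  rw [pFun_replicate, pFun_replicate]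
  have hs := boundaryAct_single (Letter.inv b) x
  rw [Letter.inv_inv] at hs
  by_cases h : x.1 0 = b
  · rw [if_pos h] at hs
    have hiff : (∀ i < n, (boundaryAct (FreeGroup.mk [Letter.inv b]) x).1 i = b) ↔
        (∀ i < n + 1, x.1 i = b) := by
      simp only [hs]
      constructor
      · intro hc i hi
        cases i with
        | zero => exact h
        | succ j => exact hc j (by omega)
      · intro hc i hi
        exact hc (i + 1) (by omega)
    simp only [hiff]
  · rw [if_neg h] at hs
    rw [if_neg, if_neg]
    · intro hc; exact h (hc 0 (by omega))
    · intro hc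
      have := hc 0 hn
      rw [hs] at this
      simp at this
      exact Letter.inv_ne b this

open Classical in
lemma L2 (b : Letter d) (n : ℕ) (hn : 2 ≤ n) (x : Boundary d) :
    pFun (FreeGroup.mk (List.replicate n (Letter.inv b)))
      (boundaryAct (FreeGroup.mk [Letter.inv b]) x) =
    pFun (FreeGroup.mk (List.replicate (n - 1) (Letter.inv b))) x := by
  rw [pFun_replicate, pFun_replicate]
  have hs := boundaryAct_single (Letter.inv b) x
  rw [Letter.inv_inv] at hs
  by_cases h : x.1 0 = b
  · rw [if_pos h] at hs
    have hA : ¬ ∀ i < n, (boundaryAct (FreeGroup.mk [Letter.inv b]) x).1 i = Letter.inv b := by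
      intro hc
      have h1 : x.1 1 = Letter.inv b := by simpa [hs] using hc 0 (by omega)
      have h2 := x.2 0
      rw [h, h1] at h2
      exact h2 rfl
    have hB : ¬ ∀ i < n - 1, x.1 i = Letter.inv b := by
      intro hc
      have := hc 0 (by omega)
      rw [this] at h
      exact Letter.inv_ne b h
    rw [if_neg hA, if_neg hB]
  · rw [if_neg h] at hs
    have hiff : (∀ i < n, (boundaryAct (FreeGroup.mk [Letter.inv b]) x).1 i = Letter.inv b) ↔
        (∀ i < n - 1, x.1 i = Letter.inv b) := by
      simp only [hs]
      constructor
      · intro hc i hi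
        have := hc (i + 1) (by omega)
        simpa using this
      · intro hc i hi
        cases i with
        | zero => simp
        | succ j => simpa using hc j (by omega)
    simp only [hiff]

open Classical in
lemma L3 (b : Letter d) (x : Boundary d) :
    pFun (FreeGroup.mk (List.replicate 1 (Letter.inv b)))
      (boundaryAct (FreeGroup.mk [Letter.inv b]) x) =
    1 - pFun (FreeGroup.mk (List.replicate 1 b)) x := by
  rw [pFun_replicate, pFun_replicate]
  have hs := boundaryAct_single (Letter.inv b) x
  rw [Letter.inv_inv] at hs
  by_cases h : x.1 0 = b
  · rw [if_pos h] at hs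
    have hA : ¬ ∀ i < 1, (boundaryAct (FreeGroup.mk [Letter.inv b]) x).1 i = Letter.inv b := by
      intro hc
      have h1 : x.1 1 = Letter.inv b := by simpa [hs] using hc 0 (by omega)
      have h2 := x.2 0
      rw [h, h1] at h2
      exact h2 rfl
    have hB : ∀ i < 1, x.1 i = b := by
      intro i hi
      interval_cases i
      exact h
    rw [if_neg hA, if_pos hB]
    norm_num
  · rw [if_neg h] at hs
    have hA : ∀ i < 1, (boundaryAct (FreeGroup.mk [Letter.inv b]) x).1 i = Letter.inv b := by
      intro i hi
      interval_cases i
      simp [hs]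
    have hB : ¬ ∀ i < 1, x.1 i = b := by
      intro hc
      exact h (hc 0 (by omega))
    rw [if_pos hA, if_neg hB]
    norm_num

lemma of_eq' (s : Fin d) : FreeGroup.of s = FreeGroup.mk [((s, true) : Letter d)] := by
  simpa using of_pow s 1

lemma of_inv_eq' (s : Fin d) :
    (FreeGroup.of s)⁻¹ = FreeGroup.mk [Letter.inv ((s, true) : Letter d)] := by
  have h : Letter.inv ((s, true) : Letter d) = ((s, false) : Letter d) := rfl
  rw [h]
  simpa using of_pow_inv s 1

open Classical in
lemma qPow_eq (s : Fin d) (n : ℕ) (x : Boundary d) :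
    qPow s n x = pFun (FreeGroup.mk (List.replicate n ((s, true) : Letter d))) x +
      pFun (FreeGroup.mk (List.replicate n (Letter.inv ((s, true) : Letter d)))) x := by
  have h : Letter.inv ((s, true) : Letter d) = ((s, false) : Letter d) := rfl
  unfold qPow
  rw [of_pow_inv, of_pow, h]

end QP

/-- For every generator `s`, with `(g·f)(x) := f(g⁻¹·x)`:
(i) `q[s²] = s·q[s] + s⁻¹·q[s] + q[s] − 2`;
(ii) for every `k > 2`, `q[sᵏ] = s·q[sᵏ⁻¹] + s⁻¹·q[sᵏ⁻¹] − q[sᵏ⁻²]`. -/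
theorem q_power_identities (d : ℕ) (hd : 2 ≤ d) (s : Fin d) :
    (∀ x : Boundary d,
      qPow s 2 x =
        qPow s 1 (boundaryAct (FreeGroup.of s)⁻¹ x) +
        qPow s 1 (boundaryAct (FreeGroup.of s) x) + qPow s 1 x - 2) ∧
    (∀ k : ℕ, 2 < k → ∀ x : Boundary d,
      qPow s k x =
        qPow s (k - 1) (boundaryAct (FreeGroup.of s)⁻¹ x) +
        qPow s (k - 1) (boundaryAct (FreeGroup.of s) x) -
        qPow s (k - 2) x) := by
  constructor
  · intro x
    simp only [QP.qPow_eq]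
    rw [QP.of_inv_eq' s, QP.of_eq' s]
    have e1 := QP.L1 ((s, true) : Letter d) 1 le_rfl x
    have e2 := QP.L3 ((s, true) : Letter d) x
    have e3 := QP.L1 (Letter.inv ((s, true) : Letter d)) 1 le_rfl x
    have e4 := QP.L3 (Letter.inv ((s, true) : Letter d)) x
    rw [QP.Letter.inv_inv] at e3 e4
    have h12 : (1 : ℕ) + 1 = 2 := rfl
    rw [h12] at e1 e3
    rw [e1, e2, e3, e4]
    ring
  · intro k hk x
    have h1 : k - 1 + 1 = k := by omega
    have h2 : k - 1 - 1 = k - 2 := by omega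
    simp only [QP.qPow_eq]
    rw [QP.of_inv_eq' s, QP.of_eq' s]
    have e1 := QP.L1 ((s, true) : Letter d) (k - 1) (by omega) x
    have e2 := QP.L2 ((s, true) : Letter d) (k - 1) (by omega) x
    have e3 := QP.L1 (Letter.inv ((s, true) : Letter d)) (k - 1) (by omega) x
    have e4 := QP.L2 (Letter.inv ((s, true) : Letter d)) (k - 1) (by omega) x
    rw [QP.Letter.inv_inv] at e3 e4
    rw [h1] at e1 e3
    rw [h2] at e2 e4
    rw [e1, e2, e3, e4]
    ring
end

section
/- Let n ≥ 1 and let F be a set of elements of F_d all of reduced-word length n such that the function r := Σ_{w ∈ F} p[w] is constant on each equivalence class of R_S (i.e. r(x) = r(y) whenever (x, y) ∈ R_S). For w ∈ F_d \ {e} with syllable decomposition w = s_{i(1)}^{n(1)} ⋯ s_{i(k)}^{n(k)} (where s_{i(j)} ∈ S, the n(j) are nonzero integers, and s_{i(j)} ≠ s_{i(j+1)} for all j), set ŵ := s_{i(1)}^{n(1)} ⋯ s_{i(k-1)}^{n(k-1)} s_{i(k)}^{-n(k)}. Then w ∈ F implies ŵ ∈ F. -/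
/-! Write the reduced word of `w` as `p aᵏ` with `k > 0` and the last letter of `p` not in
`{a, a⁻¹}`; the reduced word of `ŵ` is then `p a⁻ᵏ`. The boundary points `x = p·a^{+∞}` and
`y = p·a^{-∞}` are `R_S`-related. Since all words of `F` have the common length of `w` and `ŵ`,
the only cylinder of `F` containing `x` is that of `w`, and the only one that can contain `y` is
that of `ŵ`. Hence `1 = r(x) = r(y) = [ŵ ∈ F]`. -/

open FreeGroup List

variable {d : ℕ}

namespace Letter

@[simp] lemma inv_fst (a : Letter d) : a.inv.1 = a.1 := rfl

@[simp] lemma inv_snd (a : Letter d) : a.inv.2 = !a.2 := rfl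

lemma ne_inv_iff {a b : Letter d} : b ≠ a.inv ↔ (a.1 = b.1 → a.2 = b.2) := by
  obtain ⟨i, s⟩ := a
  obtain ⟨j, t⟩ := b
  simp only [Letter.inv, ne_eq, Prod.mk.injEq]
  cases s <;> cases t <;> grind

end Letter

def Boundary.const (a : Letter d) : Boundary d :=
  ⟨fun _ => a, fun _ => Letter.ne_inv_iff.2 fun _ => rfl⟩

lemma mk_singleton_pow (a : Letter d) (m : ℕ) : mk [a] ^ m = mk (replicate m a) := by
  induction m with
  | zero => rfl
  | succ m ih => rw [pow_succ, ih, mul_mk, ← replicate_succ']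

lemma isPlusLimit_mk_singleton (a : Letter d) :
    IsPlusLimit (mk [a]) (Boundary.const a) := by
  intro k
  refine ⟨k, fun m hm => ?_⟩
  rw [mk_singleton_pow, toWord_mk, reduce_replicate]
  exact ⟨by simpa using hm, fun i hi => by simp [hi.trans_le hm, Boundary.const]⟩

lemma inv_mk_singleton (a : Letter d) : (mk [a])⁻¹ = mk [a.inv] := by
  rw [inv_mk]
  rfl

lemma pair_mem_RW_of_letter (g : FreeGroup (Fin d)) (a : Letter d) :
    (boundaryAct g (Boundary.const a), boundaryAct g (Boundary.const a.inv)) ∈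
      RW (Set.range (of : Fin d → FreeGroup (Fin d))) := by
  refine Or.inr ⟨g, mk [a], _, _, ?_, isPlusLimit_mk_singleton a, ?_, rfl, rfl⟩
  · obtain ⟨i, _ | _⟩ := a
    · exact Or.inr ⟨i, by rw [inv_mk_singleton]; rfl⟩
    · exact Or.inl ⟨i, rfl⟩
  · rw [inv_mk_singleton]
    exact isPlusLimit_mk_singleton a.inv

lemma isReducedSeq_getD {p : List (Letter d)} {a : Letter d} (h : IsReduced (p ++ [a])) :
    IsReducedSeq (fun i => p.getD i a) := by
  intro m
  have hp := isChain_iff_getElem.1 h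
  rw [Letter.ne_inv_iff]
  rcases lt_trichotomy (m + 1) p.length with hm | hm | hm
  · simpa [getD_eq_getElem, hm, (Nat.lt_succ_self m).trans hm] using hp m (by simp; omega)
  · simpa [getD_eq_getElem, getD_eq_default, ← hm, getElem_append] using hp m (by simp; omega)
  · simp [show p.length ≤ m by omega, show p.length ≤ m + 1 by omega]

lemma cancelLen_const_eq_zero {p : List (Letter d)} {a : Letter d} (h : IsReduced (p ++ [a])) :
    cancelLen p (fun _ => a) = 0 := by
  refine Nat.findGreatest_eq_zero_iff.2 fun k hk hkp hcancel => ?_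
  obtain ⟨hlt, hlast⟩ := List.getElem?_eq_some_iff.1 (hcancel 0 hk)
  have hpos : 0 < p.length := by omega
  have := isChain_iff_getElem.1 h (p.length - 1) (by simp; omega)
  simp only [Nat.sub_zero] at hlast
  simp [show p.length - 1 + 1 = p.length by omega, hpos, hlast] at this

lemma boundaryAct_mk_const {p : List (Letter d)} {a : Letter d} (h : IsReduced (p ++ [a])) :
    (boundaryAct (mk p) (Boundary.const a)).1 = fun i => p.getD i a := by
  have hp : (mk p).toWord = p := by
    rw [toWord_mk, (h.infix (infix_append [] p [a])).reduce_eq]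
  have hcat : concatReduce p (fun _ => a) = fun i => p.getD i a := by
    funext i
    simp only [concatReduce, cancelLen_const_eq_zero h]
    split_ifs with hi
    · simp [getElem?_eq_getElem (show i < p.length by omega)]
    · simp [getElem?_eq_none (show p.length ≤ i by omega)]
  have hred : IsReducedSeq (concatReduce p (Boundary.const a).1) := hcat ▸ isReducedSeq_getD h
  rw [boundaryAct, hp, dif_pos hred]
  exact hcat

lemma getElem?_append_replicate {p : List (Letter d)} {a : Letter d} {k i : ℕ}
    (hi : i < p.length + k) : (p ++ replicate k a)[i]? = some (p.getD i a) := by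
  rw [getElem?_append, getD_eq_getElem?_getD]
  split_ifs with hp
  · simp [getElem?_eq_getElem hp]
  · simp [getElem?_eq_none (not_lt.1 hp), show i - p.length < k by omega]

lemma sum_pFun_eq_ite {F : Finset (FreeGroup (Fin d))} {n : ℕ}
    (hF : ∀ v ∈ F, v.toWord.length = n) {w : FreeGroup (Fin d)} (hw : w.toWord.length = n)
    {x : Boundary d} (hx : ∀ i < n, w.toWord[i]? = some (x.1 i)) :
    ∑ v ∈ F, pFun v x = if w ∈ F then 1 else 0 := by
  classical
  have hp : ∀ v ∈ F, pFun v x = if v = w then 1 else 0 := by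
    intro v hv
    by_cases hvw : v = w
    · subst hvw
      simpa [pFun, hw] using hx
    · refine (if_neg fun hvx => hvw (toWord_injective (ext_getElem? fun i => ?_))).trans
        (if_neg hvw).symm
      rcases lt_or_ge i n with hi | hi
      · rw [hvx i (by rw [hF v hv]; exact hi), hx i hi]
      · rw [getElem?_eq_none (by rw [hF v hv]; exact hi), getElem?_eq_none (by rw [hw]; exact hi)]
  rw [Finset.sum_congr rfl hp, Finset.sum_ite_eq']

lemma sum_pFun_boundaryAct_mk_const {F : Finset (FreeGroup (Fin d))} {n : ℕ}
    (hF : ∀ v ∈ F, v.toWord.length = n) {w : FreeGroup (Fin d)} {p : List (Letter d)}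
    {a : Letter d} {k : ℕ} (hk : 0 < k) (hw : w.toWord = p ++ replicate k a)
    (hn : w.toWord.length = n) :
    ∑ v ∈ F, pFun v (boundaryAct (mk p) (Boundary.const a)) = if w ∈ F then 1 else 0 := by
  have hred : IsReduced (p ++ [a]) := by
    refine (hw ▸ isReduced_toWord).infix ⟨[], replicate (k - 1) a, ?_⟩
    rw [nil_append, append_assoc, singleton_append, ← replicate_succ, Nat.sub_add_cancel hk]
  refine sum_pFun_eq_ite hF hn fun i hi => ?_
  rw [boundaryAct_mk_const hred, hw, getElem?_append_replicate]
  simpa [← hn, hw] using hi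

lemma hatWord_of_toWord_eq_nil {w : FreeGroup (Fin d)} (hw : w.toWord = []) : hatWord w = w := by
  simp [hatWord, hw]

lemma isReduced_append_replicate_inv {p : List (Letter d)} {a : Letter d} {k : ℕ}
    (h : IsReduced (p ++ replicate k a)) (hk : 0 < k) (hlast : ∀ b ∈ p.getLast?, b ≠ a) :
    IsReduced (p ++ replicate k a.inv) := by
  obtain ⟨hp, -, hjoin⟩ := isChain_append.1 h
  refine isChain_append.2 ⟨hp, isChain_replicate_of_rel k fun _ => rfl, fun b hb c hc => ?_⟩
  rw [head?_replicate, if_neg hk.ne', Option.mem_some_iff] at hc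
  rw [head?_replicate, if_neg hk.ne'] at hjoin
  have hb1 : b.1 ≠ a.1 := fun h1 => hlast b hb (Prod.ext h1 (hjoin b hb a rfl h1))
  exact fun h1 => absurd (h1.trans (congrArg Prod.fst hc.symm)) hb1

lemma exists_toWord_eq_append_replicate {w : FreeGroup (Fin d)} (hw : w.toWord ≠ []) :
    ∃ (p : List (Letter d)) (a : Letter d) (k : ℕ), 0 < k ∧
      w.toWord = p ++ replicate k a ∧ (hatWord w).toWord = p ++ replicate k a.inv := by
  obtain ⟨a, t, hrev⟩ : ∃ (a : Letter d) (t : List (Letter d)), w.toWord.reverse = a :: t :=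
    exists_cons_of_ne_nil (reverse_ne_nil_iff.2 hw)
  set k := (w.toWord.reverse.takeWhile (· == a)).length
  set p := (w.toWord.reverse.dropWhile (· == a)).reverse
  have hrun : w.toWord.reverse.takeWhile (· == a) = replicate k a :=
    eq_replicate_iff.2 ⟨rfl, fun b hb => by simpa using mem_takeWhile_imp hb⟩
  have hk : 0 < k := by simp [k, hrev]
  have hu : w.toWord = p ++ replicate k a := by
    have := congrArg reverse (takeWhile_append_dropWhile (p := (· == a)) (l := w.toWord.reverse))
    rw [hrun, reverse_reverse, reverse_append, reverse_replicate] at this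
    exact this.symm
  have hlast : ∀ b ∈ p.getLast?, b ≠ a := by
    intro b hb
    rw [getLast?_reverse] at hb
    have := head?_dropWhile_not (· == a) w.toWord.reverse
    rw [hb] at this
    simpa using this
  have hred := isReduced_append_replicate_inv (hu ▸ isReduced_toWord) hk hlast
  refine ⟨p, a, k, hk, hu, ?_⟩
  have hhat : hatWord w = mk (p ++ replicate k a.inv) := by
    simp only [hatWord, hrev]
    rw [← hrev]
    change mk (take (w.toWord.length - k) w.toWord ++ replicate k a.inv) = _
    rw [hu, length_append, length_replicate, Nat.add_sub_cancel, take_left' rfl]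
  rw [hhat, toWord_mk, hred.reduce_eq]

theorem hat_mem_of_sum_constant_general (d : ℕ) (n : ℕ)
    (F : Finset (FreeGroup (Fin d)))
    (hF : ∀ w ∈ F, (FreeGroup.toWord w).length = n)
    (hconst : ∀ x y : Boundary d,
      (x, y) ∈ RW (Set.range (FreeGroup.of : Fin d → FreeGroup (Fin d))) →
      ∑ w ∈ F, pFun w x = ∑ w ∈ F, pFun w y) :
    ∀ w ∈ F, hatWord w ∈ F := by
  intro w hw
  by_cases hnil : w.toWord = []
  · rwa [hatWord_of_toWord_eq_nil hnil]
  obtain ⟨p, a, k, hk, hwp, hhat⟩ := exists_toWord_eq_append_replicate hnil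
  have hlen : (hatWord w).toWord.length = n := by simpa [hhat, hwp] using hF w hw
  have hsum := hconst _ _ (pair_mem_RW_of_letter (mk p) a)
  rw [sum_pFun_boundaryAct_mk_const hF hk hwp (hF w hw),
    sum_pFun_boundaryAct_mk_const hF hk hhat hlen, if_pos hw] at hsum
  by_contra hnot
  exact one_ne_zero (hsum.trans (if_neg hnot))

/-- Let `n ≥ 1` and let `F` be a set of elements of `F_d` of
reduced-word length `n` such that `r = Σ_{w ∈ F} p[w]` is constant on each
equivalence class of `R_S`.  Then `w ∈ F` implies `ŵ ∈ F`. -/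
theorem hat_mem_of_sum_constant (d : ℕ) (hd : 2 ≤ d) (n : ℕ) (hn : 1 ≤ n)
    (F : Finset (FreeGroup (Fin d)))
    (hF : ∀ w ∈ F, (FreeGroup.toWord w).length = n)
    (hconst : ∀ x y : Boundary d,
      (x, y) ∈ RW (Set.range (FreeGroup.of : Fin d → FreeGroup (Fin d))) →
      ∑ w ∈ F, pFun w x = ∑ w ∈ F, pFun w y) :
    ∀ w ∈ F, hatWord w ∈ F :=
  hat_mem_of_sum_constant_general d n F hF hconst
end
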